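/- arXiv:2310.18041 — 3 statements merged into one kernel-verified Lean document; each statement's English description precedes it below -/
import Mathlib

section
/- Let I = (−ρ, ρ) where 0 < ρ ≤ ∞, and let k be a positive integer. A function f : I → ℝ satisfies: for every n ≥ k and every A ∈ S_n^{(k)}(I), the entrywise transform f[A] is positive semidefinite (i.e., lies in S_n^{(0)}), if and only if f is a non-negative constant, f(x) = c for all x ∈ I for some c ≥ 0. -/
/-- The number of negative eigenvalues (with multiplicity) of a real symmetric
(Hermitian) matrix; junk value `0` if the matrix is not Hermitian. -/
noncomputable def negEigCount {n : Type*} [Fintype n] [DecidableEq n]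
    (A : Matrix n n ℝ) : ℕ :=
  if hA : A.IsHermitian then Nat.card {i // hA.eigenvalues i < 0} else 0

/-- Membership in the interval `(-ρ, ρ)` for `ρ : EReal` (so `ρ = ∞` is allowed). -/
def memI (ρ : EReal) (x : ℝ) : Prop := -ρ < (x : EReal) ∧ (x : EReal) < ρ

/-!
Fix `0 < a < ρ` and `|u| ≤ a`. The block-diagonal matrix `!![a, u; u, a] ⊕ (-a) • 1` of size
`2 + k` has entries in `(-ρ, ρ)` and exactly `k` negative eigenvalues, and for `u < a` so does
`!![u, a; a, u] ⊕ (-a) • 1` of size `2 + (k - 1)`. Positivity of the leading `2 × 2` block of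
`f[-]` applied to these two matrices gives `0 ≤ f a` and `f u ≤ f a ≤ f u`. Hence `f` equals
`f 0 ≥ 0` on `(-ρ, ρ)`; conversely a constant matrix with non-negative entry is positive
semidefinite.
-/

open Matrix Polynomial

section NegEigCount

variable {m n : Type*} [Fintype m] [DecidableEq m] [Fintype n] [DecidableEq n]

lemma negEigCount_eq_card_filter_roots {A : Matrix n n ℝ} (hA : A.IsHermitian) :
    negEigCount A = (A.charpoly.roots.filter (· < 0)).card := by
  rw [negEigCount, dif_pos hA, hA.roots_charpoly_eq_eigenvalues, Multiset.filter_map,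
    Multiset.card_map, Nat.card_eq_fintype_card, Fintype.card_subtype]
  rfl

lemma negEigCount_reindex (e : m ≃ n) {A : Matrix m m ℝ} (hA : A.IsHermitian) :
    negEigCount (reindex e e A) = negEigCount A := by
  rw [negEigCount_eq_card_filter_roots (hA.reindex e), negEigCount_eq_card_filter_roots hA,
    charpoly_reindex]

lemma negEigCount_fromBlocks_zero {A : Matrix m m ℝ} {D : Matrix n n ℝ}
    (hA : A.IsHermitian) (hD : D.IsHermitian) :
    negEigCount (fromBlocks A 0 0 D) = negEigCount A + negEigCount D := by
  rw [negEigCount_eq_card_filter_roots (hA.fromBlocks (by simp) hD),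
    negEigCount_eq_card_filter_roots hA, negEigCount_eq_card_filter_roots hD,
    charpoly_fromBlocks_zero₂₁, roots_mul (A.charpoly_monic.mul D.charpoly_monic).ne_zero,
    Multiset.filter_add, Multiset.card_add]

lemma negEigCount_diagonal (d : n → ℝ) :
    negEigCount (diagonal d) = Fintype.card {i // d i < 0} := by
  rw [negEigCount_eq_card_filter_roots (isHermitian_diagonal d), charpoly_diagonal,
    roots_prod _ _ (Finset.prod_ne_zero_iff.mpr fun i _ => X_sub_C_ne_zero (d i))]
  simp only [roots_X_sub_C, Multiset.bind_singleton, Multiset.filter_map, Function.comp_apply,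
    Multiset.card_map, Fintype.card_subtype]
  rfl

lemma isHermitian_circulant_fin_two (p q : ℝ) : (!![p, q; q, p]).IsHermitian := by
  ext i j; fin_cases i <;> fin_cases j <;> rfl

lemma negEigCount_fin_two (p q : ℝ) :
    negEigCount !![p, q; q, p] = (({p + q, p - q} : Multiset ℝ).filter (· < 0)).card := by
  have hchar : (!![p, q; q, p]).charpoly = (X - C (p + q)) * (X - C (p - q)) := by
    rw [charpoly_fin_two, trace_fin_two_of, det_fin_two_of]
    simp only [map_add, map_sub, map_mul]
    ring
  rw [negEigCount_eq_card_filter_roots (isHermitian_circulant_fin_two p q), hchar,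
    roots_mul (mul_ne_zero (X_sub_C_ne_zero _) (X_sub_C_ne_zero _)), roots_X_sub_C, roots_X_sub_C]
  rfl

end NegEigCount

section TestMatrix

def blockTestMatrix (p q a : ℝ) (j : ℕ) : Matrix (Fin (2 + j)) (Fin (2 + j)) ℝ :=
  reindex finSumFinEquiv finSumFinEquiv (fromBlocks !![p, q; q, p] 0 0 (diagonal fun _ => -a))

variable (p q a : ℝ) (j : ℕ)

lemma isHermitian_fromBlocks_circulant_diagonal :
    (fromBlocks !![p, q; q, p] 0 0 (diagonal fun _ : Fin j => -a)).IsHermitian :=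
  (isHermitian_circulant_fin_two p q).fromBlocks (by simp) (isHermitian_diagonal _)

lemma blockTestMatrix_isSymm : (blockTestMatrix p q a j).IsSymm :=
  isHermitian_iff_isSymm.mp ((isHermitian_fromBlocks_circulant_diagonal p q a j).reindex _)

lemma negEigCount_blockTestMatrix {a : ℝ} (ha : 0 < a) :
    negEigCount (blockTestMatrix p q a j) =
      (({p + q, p - q} : Multiset ℝ).filter (· < 0)).card + j := by
  rw [blockTestMatrix, negEigCount_reindex _ (isHermitian_fromBlocks_circulant_diagonal p q a j),
    negEigCount_fromBlocks_zero (isHermitian_circulant_fin_two p q) (isHermitian_diagonal _),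
    negEigCount_fin_two, negEigCount_diagonal]
  simp [neg_neg_iff_pos.mpr ha]

lemma abs_blockTestMatrix_apply_le {p q a : ℝ} (hp : |p| ≤ a) (hq : |q| ≤ a)
    (i i' : Fin (2 + j)) : |blockTestMatrix p q a j i i'| ≤ a := by
  have ha : 0 ≤ a := (abs_nonneg p).trans hp
  simp only [blockTestMatrix, reindex_apply, submatrix_apply]
  rcases finSumFinEquiv.symm i with x | x <;> rcases finSumFinEquiv.symm i' with y | y
  · fin_cases x <;> fin_cases y <;> simpa
  · simpa
  · simpa
  · rcases eq_or_ne x y with rfl | h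
    · simp [abs_of_nonneg ha]
    · simp [diagonal_apply_ne _ h, ha]

lemma blockTestMatrix_apply_castAdd (i i' : Fin 2) :
    blockTestMatrix p q a j (Fin.castAdd j i) (Fin.castAdd j i') = !![p, q; q, p] i i' := by
  simp [blockTestMatrix]

end TestMatrix

lemma Matrix.PosSemidef.apply_add_apply_le {n : Type*} [Fintype n] [DecidableEq n]
    {A : Matrix n n ℝ} (hA : A.PosSemidef) (i j : n) : A i j + A j i ≤ A i i + A j j := by
  have h := hA.dotProduct_mulVec_nonneg (Pi.single i 1 - Pi.single j 1)
  simp only [star_trivial, mulVec_sub, mulVec_single, MulOpposite.op_one, one_smul,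
    dotProduct_sub, sub_dotProduct, single_dotProduct, col_apply, one_mul] at h
  linarith

lemma posSemidef_of_const_nonneg {n : Type*} [Fintype n] {c : ℝ} (hc : 0 ≤ c) :
    (of fun _ _ : n => c).PosSemidef := by
  have h : (of fun _ _ : n => c) = vecMulVec (fun _ => √c) (star fun _ => √c) := by
    ext; simp [vecMulVec_apply, Real.mul_self_sqrt hc]
  rw [h]
  exact posSemidef_vecMulVec_self_star _

lemma memI_iff_abs_lt {ρ : EReal} {x : ℝ} : memI ρ x ↔ ((|x| : ℝ) : EReal) < ρ := by
  rw [memI, EReal.neg_lt_comm, ← EReal.coe_neg, abs_eq_max_neg,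
    EReal.coe_strictMono.monotone.map_max, max_lt_iff, and_comm]

lemma memI_of_abs_le {ρ : EReal} {x a : ℝ} (hx : |x| ≤ a) (ha : (a : EReal) < ρ) :
    memI ρ x :=
  memI_iff_abs_lt.mpr ((EReal.coe_le_coe_iff.mpr hx).trans_lt ha)

def MapsToPosSemidef (ρ : EReal) (k : ℕ) (f : ℝ → ℝ) : Prop :=
  ∀ n : ℕ, k ≤ n → ∀ A : Matrix (Fin n) (Fin n) ℝ,
    A.IsSymm → (∀ i j, memI ρ (A i j)) → negEigCount A = k → (A.map f).PosSemidef

namespace MapsToPosSemidef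

variable {ρ : EReal} {k : ℕ} {f : ℝ → ℝ} {p q a : ℝ}

lemma le_apply (H : MapsToPosSemidef ρ k f) (ha : 0 < a) (haρ : (a : EReal) < ρ)
    (hp : |p| ≤ a) (hq : |q| ≤ a) (j : ℕ)
    (hj : (({p + q, p - q} : Multiset ℝ).filter (· < 0)).card + j = k) :
    0 ≤ f p ∧ f q ≤ f p := by
  have hcard : (({p + q, p - q} : Multiset ℝ).filter (· < 0)).card ≤ 2 :=
    Multiset.card_le_card (Multiset.filter_le _ _)
  have hpsd := H (2 + j) (by omega) _ (blockTestMatrix_isSymm p q a j)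
    (fun i i' => memI_of_abs_le (abs_blockTestMatrix_apply_le j hp hq i i') haρ)
    (by rw [negEigCount_blockTestMatrix p q j ha, hj])
  have hp₀ : 0 ≤ f p := by
    simpa [blockTestMatrix_apply_castAdd] using hpsd.diag_nonneg (i := Fin.castAdd j 0)
  have hqp : f q + f q ≤ f p + f p := by
    simpa [blockTestMatrix_apply_castAdd] using
      hpsd.apply_add_apply_le (Fin.castAdd j 0) (Fin.castAdd j 1)
  exact ⟨hp₀, by linarith⟩

lemma apply_eq (H : MapsToPosSemidef ρ k f) (hk : 1 ≤ k) (ha : 0 < a) (haρ : (a : EReal) < ρ)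
    {u : ℝ} (hu : |u| ≤ a) : 0 ≤ f a ∧ f u = f a := by
  have habs : |a| ≤ a := (abs_of_pos ha).le
  obtain ⟨hu₁, hu₂⟩ := abs_le.mp hu
  have hsum : ¬ a + u < 0 := by linarith
  have hdiff : ¬ a - u < 0 := by linarith
  -- `!![a, u; u, a]` has eigenvalues `a ± u ≥ 0`, so all `k` negative ones come from `-a`.
  obtain ⟨hfa, hfu⟩ := H.le_apply ha haρ habs hu k
    (by simp [Multiset.filter_singleton, hsum, hdiff])
  refine ⟨hfa, le_antisymm hfu ?_⟩
  rcases hu₂.eq_or_lt with rfl | hlt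
  · rfl
  have hsum' : ¬ u + a < 0 := by linarith
  have hdiff' : u - a < 0 := by linarith
  -- `!![u, a; a, u]` has eigenvalues `u + a ≥ 0 > u - a`, leaving `k - 1` copies of `-a`.
  exact (H.le_apply ha haρ hu habs (k - 1)
    (by simp [Multiset.filter_singleton, hsum', hdiff', Nat.add_sub_cancel' hk])).2

end MapsToPosSemidef

/-- Theorem A (the case `l = 0`): for positive `k`, the transform `f[-]` sends
`S_n^(k)((-ρ,ρ))` into the positive semidefinite matrices for all `n ≥ k` if and only if
`f` is a non-negative constant on `(-ρ,ρ)`. -/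
theorem preserver_to_psd_iff (ρ : EReal) (hρ : 0 < ρ) (k : ℕ) (hk : 1 ≤ k) (f : ℝ → ℝ) :
    (∀ n : ℕ, k ≤ n → ∀ A : Matrix (Fin n) (Fin n) ℝ,
        A.IsSymm → (∀ i j, memI ρ (A i j)) → negEigCount A = k →
        (A.map f).PosSemidef) ↔
    (∃ c : ℝ, 0 ≤ c ∧ ∀ x : ℝ, memI ρ x → f x = c) := by
  constructor
  · intro (H : MapsToPosSemidef ρ k f)
    refine ⟨f 0, ?_, fun x hx => ?_⟩
    · obtain ⟨a, ha, haρ⟩ := EReal.exists_between_coe_real hρ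
      obtain ⟨hfa, hf0⟩ := H.apply_eq hk (mod_cast ha) haρ (abs_zero.trans_le (mod_cast ha.le))
      exact hf0 ▸ hfa
    · obtain ⟨a, hxa, haρ⟩ := EReal.exists_between_coe_real (memI_iff_abs_lt.mp hx)
      have hxa : |x| < a := mod_cast hxa
      have ha : 0 < a := (abs_nonneg x).trans_lt hxa
      rw [(H.apply_eq hk ha haρ hxa.le).2, (H.apply_eq hk ha haρ (abs_zero.trans_le ha.le)).2]
  · rintro ⟨c, hc, hfc⟩ n - A - hA -
    convert posSemidef_of_const_nonneg (n := Fin n) hc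
    ext i j
    exact hfc _ (hA i j)
end

section
/- Let H be a separable real Hilbert space and J : H → H a bounded linear self-adjoint operator with J² = Id_H whose eigenspace {x ∈ H : Jx = −x} has finite dimension k, and let (v_j)_{j=1}^∞ be a sequence of vectors in H. Then there exists a threshold N such that the number of negative eigenvalues (counted with multiplicity) of the n×n Gram matrix (⟨v_i, J v_j⟩)_{i,j=1}^{n} is the same for all n ≥ N. -/
open Module QuadraticMap QuadraticForm Matrix

namespace Matrix.IsHermitian

variable {n : Type*} [Fintype n] [DecidableEq n] {A : Matrix n n ℝ}

theorem toQuadraticForm'_equivalent_weightedSumSquares (hA : A.IsHermitian) :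
    A.toQuadraticForm'.Equivalent (weightedSumSquares ℝ hA.eigenvalues) := by
  refine ⟨⟨UnitaryGroup.toLinearEquiv (star hA.eigenvectorUnitary), fun x => ?_⟩⟩
  set U : Matrix n n ℝ := hA.eigenvectorUnitary.1
  have hA' : A = U * diagonal hA.eigenvalues * Uᵀ := by
    simpa [Unitary.conjStarAlgAut_apply, star_eq_conjTranspose] using hA.spectral_theorem
  show weightedSumSquares ℝ hA.eigenvalues (star U *ᵥ x) = toLinearMap₂' ℝ A x x
  rw [toLinearMap₂'_apply', star_eq_conjTranspose, conjTranspose_eq_transpose_of_trivial]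
  calc weightedSumSquares ℝ hA.eigenvalues (Uᵀ *ᵥ x)
      = (Uᵀ *ᵥ x) ⬝ᵥ diagonal hA.eigenvalues *ᵥ (Uᵀ *ᵥ x) := by
        simp only [weightedSumSquares_apply, dotProduct, mulVec_diagonal, smul_eq_mul]
        exact Finset.sum_congr rfl fun i _ => by ring
    _ = x ⬝ᵥ (U * diagonal hA.eigenvalues * Uᵀ) *ᵥ x := by
        rw [← mulVec_mulVec, ← mulVec_mulVec, dotProduct_mulVec x, ← mulVec_transpose]
    _ = x ⬝ᵥ A *ᵥ x := by rw [← hA']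

theorem negEigCount_eq_sigNeg (hA : A.IsHermitian) :
    negEigCount A = sigNeg A.toQuadraticForm' := by
  rw [negEigCount, dif_pos hA,
    sigNeg_of_equiv_weightedSumSquares hA.toQuadraticForm'_equivalent_weightedSumSquares]
  rfl

end Matrix.IsHermitian

namespace QuadraticForm

variable {𝕜 M M' : Type*} [Field 𝕜] [LinearOrder 𝕜] [AddCommGroup M] [Module 𝕜 M]
  [AddCommGroup M'] [Module 𝕜 M'] {Q : QuadraticForm 𝕜 M'} {L : M →ₗ[𝕜] M'}
  {V : Submodule 𝕜 M}

theorem negDef_map (hV : ((-Q.comp L).restrict V).PosDef) :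
    ((-Q).restrict (V.map L)).PosDef := by
  rintro ⟨y, hy⟩ hy0
  obtain ⟨x, hx, rfl⟩ := Submodule.mem_map.1 hy
  exact hV ⟨x, hx⟩ fun h => hy0 (by simp_all [Submodule.mk_eq_zero])

theorem finrank_map_eq_of_negDef (hV : ((-Q.comp L).restrict V).PosDef) :
    finrank 𝕜 (V.map L) = finrank 𝕜 V := by
  have hinj : Function.Injective (L.domRestrict V) := by
    refine (injective_iff_map_eq_zero _).2 fun x hx => ?_
    by_contra hx0
    have hpos : 0 < -Q (L x) := hV x hx0
    rw [show L x = 0 from hx, map_zero, neg_zero] at hpos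
    exact hpos.false
  rw [← LinearMap.range_domRestrict, LinearMap.finrank_range_of_inj hinj]

theorem sigNeg_comp_le_of_forall_finrank_le [FiniteDimensional 𝕜 M] {d : ℕ}
    (h : ∀ W : Submodule 𝕜 M', ((-Q).restrict W).PosDef → finrank 𝕜 W ≤ d) :
    sigNeg (Q.comp L) ≤ d := by
  obtain ⟨V, hVr, hV⟩ := exists_finrank_eq_sigNeg_and_negDef (Q.comp L)
  rw [← hVr, ← finrank_map_eq_of_negDef hV]
  exact h _ (negDef_map hV)

theorem sigNeg_comp_le [FiniteDimensional 𝕜 M] [FiniteDimensional 𝕜 M'] :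
    sigNeg (Q.comp L) ≤ sigNeg Q :=
  sigNeg_comp_le_of_forall_finrank_le fun _ => le_sigNeg_of_negDef Q

end QuadraticForm

theorem Fintype.linearCombination_comp {R E ι κ : Type*} [CommRing R] [AddCommGroup E]
    [Module R E] [Fintype ι] [Fintype κ] [DecidableEq κ] (u : κ → E) (e : ι → κ) :
    Fintype.linearCombination R (u ∘ e) =
      Fintype.linearCombination R u ∘ₗ Fintype.linearCombination R fun i => Pi.single (e i) 1 := by
  classical
  refine (Pi.basisFun R ι).ext fun i => ?_
  simp [Fintype.linearCombination_apply_single]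

namespace LinearMap.BilinForm

section CommRing

variable {R E ι : Type*} [CommRing R] [AddCommGroup E] [Module R E]

def gramMatrix (B : LinearMap.BilinForm R E) (u : ι → E) : Matrix ι ι R :=
  Matrix.of fun i j => B (u i) (u j)

variable [Fintype ι] [DecidableEq ι] (B : LinearMap.BilinForm R E) (u : ι → E)

theorem toLinearMap₂'_gramMatrix :
    toLinearMap₂' R (B.gramMatrix u) =
      B.compl₁₂ (Fintype.linearCombination R u) (Fintype.linearCombination R u) :=
  LinearMap.ext_basis (Pi.basisFun R ι) (Pi.basisFun R ι) fun i j => by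
    simp [gramMatrix, toLinearMap₂'_apply', Fintype.linearCombination_apply_single]

theorem toQuadraticForm'_gramMatrix :
    (B.gramMatrix u).toQuadraticForm' =
      B.toQuadraticMap.comp (Fintype.linearCombination R u) := by
  rw [Matrix.toQuadraticForm', toLinearMap₂'_gramMatrix, BilinMap.toQuadraticMap_comp_same]

end CommRing

variable {E ι κ : Type*} [AddCommGroup E] [Module ℝ E] {B : LinearMap.BilinForm ℝ E}

theorem IsSymm.isHermitian_gramMatrix (hB : B.IsSymm) (u : ι → E) :
    (B.gramMatrix u).IsHermitian :=
  Matrix.ext fun i j => hB.eq (u j) (u i)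

theorem negEigCount_gramMatrix_le [Fintype ι] [DecidableEq ι] (hB : B.IsSymm) (u : ι → E)
    {d : ℕ}
    (h : ∀ W : Submodule ℝ E, ((-B.toQuadraticMap).restrict W).PosDef → finrank ℝ W ≤ d) :
    negEigCount (B.gramMatrix u) ≤ d := by
  rw [(hB.isHermitian_gramMatrix u).negEigCount_eq_sigNeg, toQuadraticForm'_gramMatrix]
  exact sigNeg_comp_le_of_forall_finrank_le h

theorem negEigCount_gramMatrix_comp_le [Fintype ι] [DecidableEq ι] [Fintype κ] [DecidableEq κ]
    (hB : B.IsSymm) (u : κ → E) (e : ι → κ) :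
    negEigCount (B.gramMatrix (u ∘ e)) ≤ negEigCount (B.gramMatrix u) := by
  rw [(hB.isHermitian_gramMatrix _).negEigCount_eq_sigNeg,
    (hB.isHermitian_gramMatrix _).negEigCount_eq_sigNeg, toQuadraticForm'_gramMatrix,
    toQuadraticForm'_gramMatrix, Fintype.linearCombination_comp]
  exact sigNeg_comp_le (Q := B.toQuadraticMap.comp (Fintype.linearCombination ℝ u))

end LinearMap.BilinForm

section Pontryagin

variable {H : Type*} [NormedAddCommGroup H] [InnerProductSpace ℝ H] {J : H →ₗ[ℝ] H}

noncomputable def pontryaginForm (J : H →ₗ[ℝ] H) : LinearMap.BilinForm ℝ H :=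
  (innerₗ H).compl₂ J

@[simp]
theorem pontryaginForm_apply (x y : H) : pontryaginForm J x y = inner ℝ x (J y) :=
  rfl

theorem LinearMap.IsSymmetric.isSymm_pontryaginForm (hJ : J.IsSymmetric) :
    (pontryaginForm J).IsSymm :=
  LinearMap.BilinForm.isSymm_def.2 fun x y => by
    rw [pontryaginForm_apply, pontryaginForm_apply, ← hJ, real_inner_comm]

theorem finrank_le_of_negDef_pontryaginForm (hJ2 : ∀ x, J (J x) = x)
    [FiniteDimensional ℝ (LinearMap.ker (J + LinearMap.id))] {W : Submodule ℝ H}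
    (hW : ((-(pontryaginForm J).toQuadraticMap).restrict W).PosDef) :
    finrank ℝ W ≤ finrank ℝ (LinearMap.ker (J + LinearMap.id)) := by
  let P : H →ₗ[ℝ] LinearMap.ker (J + LinearMap.id) :=
    (LinearMap.id - J).codRestrict _ fun x => by simp [hJ2]
  refine LinearMap.finrank_le_finrank_of_injective (f := P.domRestrict W) ?_
  refine (injective_iff_map_eq_zero _).2 fun x hx => ?_
  by_contra hx0
  have hJx : J x = x := (sub_eq_zero.1 (congrArg Subtype.val hx)).symm
  have hneg : 0 < -inner ℝ (x : H) (J x) := hW x hx0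
  rw [hJx] at hneg
  linarith [real_inner_self_nonneg (x := (x : H))]

end Pontryagin

theorem Monotone.exists_forall_ge_eq {c : ℕ → ℕ} (hc : Monotone c)
    (hb : BddAbove (Set.range c)) :
    ∃ N, ∀ n, N ≤ n → c n = c N := by
  obtain ⟨N, hN⟩ := Nat.sSup_mem (Set.range_nonempty c) hb
  exact ⟨N, fun n hn => le_antisymm (hN ▸ le_csSup hb ⟨n, rfl⟩) (hc hn)⟩

theorem pontryagin_gram_stabilizes_general {H : Type*} [NormedAddCommGroup H] [InnerProductSpace ℝ H]
    [CompleteSpace H]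
    (J : H →L[ℝ] H) (hJsa : IsSelfAdjoint J) (hJ2 : ∀ x, J (J x) = x)
    [FiniteDimensional ℝ (LinearMap.ker ((J : H →ₗ[ℝ] H) + LinearMap.id))]
    (v : ℕ → H) :
    ∃ N : ℕ, ∀ n : ℕ, N ≤ n →
      negEigCount (Matrix.of fun i j : Fin n => (inner ℝ (v i.1) (J (v j.1)) : ℝ)) =
      negEigCount (Matrix.of fun i j : Fin N => (inner ℝ (v i.1) (J (v j.1)) : ℝ)) := by
  have hB := hJsa.isSymmetric.isSymm_pontryaginForm
  let c n := negEigCount ((pontryaginForm (J : H →ₗ[ℝ] H)).gramMatrix fun i : Fin n => v i)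
  have hmono : Monotone c := fun m n hmn =>
    LinearMap.BilinForm.negEigCount_gramMatrix_comp_le hB (fun i : Fin n => v i) (Fin.castLE hmn)
  have hbdd : BddAbove (Set.range c) := ⟨_, Set.forall_mem_range.2 fun n =>
    LinearMap.BilinForm.negEigCount_gramMatrix_le hB _ fun _ =>
      finrank_le_of_negDef_pontryaginForm hJ2⟩
  exact hmono.exists_forall_ge_eq hbdd

/-- Corollary 3.4: for a sequence of vectors in a Pontryagin space of negative index `k`,
the number of negative eigenvalues of the `n × n` Gram matrices stabilizes for large `n`. -/
theorem pontryagin_gram_stabilizes {H : Type*} [NormedAddCommGroup H] [InnerProductSpace ℝ H]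
    [CompleteSpace H] [TopologicalSpace.SeparableSpace H]
    (J : H →L[ℝ] H) (hJsa : IsSelfAdjoint J) (hJ2 : ∀ x, J (J x) = x) (k : ℕ)
    [FiniteDimensional ℝ (LinearMap.ker ((J : H →ₗ[ℝ] H) + LinearMap.id))]
    (hdim : Module.finrank ℝ (LinearMap.ker ((J : H →ₗ[ℝ] H) + LinearMap.id)) = k)
    (v : ℕ → H) :
    ∃ N : ℕ, ∀ n : ℕ, N ≤ n →
      negEigCount (Matrix.of fun i j : Fin n => (inner ℝ (v i.1) (J (v j.1)) : ℝ)) =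
      negEigCount (Matrix.of fun i j : Fin N => (inner ℝ (v i.1) (J (v j.1)) : ℝ)) :=
  pontryagin_gram_stabilizes_general J hJsa hJ2 v
end

section
/- Let (a_ij)_{i,j=1}^∞ be an infinite real symmetric matrix such that for every n ≥ 1 the leading principal n×n submatrix (a_ij)_{i,j=1}^{n} has at most k negative eigenvalues, counted with multiplicity, where k is a non-negative integer. Then there exist sequences of vectors (u_j)_{j=1}^∞ in the real Hilbert space ℓ²(ℕ) and (w_j)_{j=1}^∞ in ℝ^k such that a_ij = ⟨u_i, u_j⟩_{ℓ²} − ⟨w_i, w_j⟩_{ℝ^k} for all i, j ≥ 1. -/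
open Finset Matrix
open scoped lp
open LinearMap (BilinForm)

namespace LinearMap.BilinForm

variable {V : Type*} [AddCommGroup V] [Module ℝ V] {B : BilinForm ℝ V}

lemma IsPosSemidef.apply_eq_zero_of_apply_self_eq_zero (hB : B.IsPosSemidef) {v : V}
    (hv : B v v = 0) (y : V) : B v y = 0 := by
  have hline : ∀ t : ℝ, 0 ≤ 2 * t * B v y + B y y := fun t => by
    have := hB.isNonneg.nonneg (t • v + y)
    simp only [map_add, map_smul, LinearMap.add_apply, LinearMap.smul_apply, smul_eq_mul, hv,
      hB.isSymm.eq y v] at this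
    linarith
  by_contra hvy
  have := hline (-(B y y + 1) / (2 * B v y))
  rw [show 2 * (-(B y y + 1) / (2 * B v y)) * B v y = -(B y y + 1) by field_simp] at this
  linarith

/-- When `B v v = 0` the division by zero makes this `B` itself, which is still the right
elimination step since then `B v = 0` for positive semidefinite `B`. -/
noncomputable def schurCompl (B : BilinForm ℝ V) (v : V) : BilinForm ℝ V :=
  B - (B v v)⁻¹ • (LinearMap.mul ℝ ℝ).compl₁₂ (B v) (B v)

lemma schurCompl_apply (v x y : V) :
    B.schurCompl v x y = B x y - B v x * B v y / B v v := by
  simp [schurCompl, div_eq_inv_mul]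

lemma IsPosSemidef.schurCompl (hB : B.IsPosSemidef) (v : V) : (B.schurCompl v).IsPosSemidef := by
  refine ⟨⟨fun x y => ?_⟩, ⟨fun x => ?_⟩⟩
  · rw [schurCompl_apply, schurCompl_apply, hB.isSymm.eq x y, mul_comm (B v x)]
  · rw [schurCompl_apply]
    rcases (hB.isNonneg.nonneg v).eq_or_lt with hv | hv
    · simpa [← hv] using hB.isNonneg.nonneg x
    -- `B x x - (B v x)² / B v v` is the value of `B` at `x - (B v x / B v v) • v`
    have := hB.isNonneg.nonneg (x - (B v x / B v v) • v)
    simp only [map_sub, map_smul, LinearMap.sub_apply, LinearMap.smul_apply, smul_eq_mul,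
      hB.isSymm.eq x v] at this
    field_simp at this ⊢
    nlinarith

lemma IsPosSemidef.schurCompl_apply_self_left (hB : B.IsPosSemidef) (v y : V) :
    B.schurCompl v v y = 0 := by
  rw [schurCompl_apply]
  rcases eq_or_ne (B v v) 0 with hv | hv
  · simp [hB.apply_eq_zero_of_apply_self_eq_zero hv y]
  · field_simp
    ring

lemma IsSymm.schurCompl_apply_eq_zero (hB : B.IsSymm) {v x : V} (hx : ∀ y, B x y = 0) (y : V) :
    B.schurCompl v x y = 0 := by
  simp [schurCompl_apply, hx, hB.eq v x]

noncomputable def schurSeq (B : BilinForm ℝ V) (v : ℕ → V) : ℕ → BilinForm ℝ V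
  | 0 => B
  | m + 1 => (schurSeq B v m).schurCompl (v m)

noncomputable def choleskyCoeff (B : BilinForm ℝ V) (v : ℕ → V) (i m : ℕ) : ℝ :=
  B.schurSeq v m (v m) (v i) / √(B.schurSeq v m (v m) (v m))

variable (v : ℕ → V)

lemma IsPosSemidef.schurSeq (hB : B.IsPosSemidef) (m : ℕ) : (B.schurSeq v m).IsPosSemidef := by
  induction m with
  | zero => exact hB
  | succ m ih => exact ih.schurCompl (v m)

lemma IsPosSemidef.schurSeq_apply_eq_zero (hB : B.IsPosSemidef) {i m : ℕ} (him : i < m) (y : V) :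
    B.schurSeq v m (v i) y = 0 := by
  induction m, him using Nat.le_induction generalizing y with
  | base => exact (hB.schurSeq v i).schurCompl_apply_self_left (v i) y
  | succ m _ ih => exact (hB.schurSeq v m).isSymm.schurCompl_apply_eq_zero ih y

lemma IsPosSemidef.choleskyCoeff_eq_zero (hB : B.IsPosSemidef) {i m : ℕ} (him : i < m) :
    B.choleskyCoeff v i m = 0 := by
  rw [choleskyCoeff, (hB.schurSeq v m).isSymm.eq, hB.schurSeq_apply_eq_zero v him, zero_div]

lemma IsPosSemidef.choleskyCoeff_mul_choleskyCoeff (hB : B.IsPosSemidef) (i j m : ℕ) :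
    B.choleskyCoeff v i m * B.choleskyCoeff v j m
      = B.schurSeq v m (v i) (v j) - B.schurSeq v (m + 1) (v i) (v j) := by
  rw [choleskyCoeff, choleskyCoeff, div_mul_div_comm,
    Real.mul_self_sqrt ((hB.schurSeq v m).isNonneg.nonneg _), BilinForm.schurSeq, schurCompl_apply]
  ring

lemma IsPosSemidef.sum_choleskyCoeff_mul (hB : B.IsPosSemidef) {i j N : ℕ} (hi : i < N) :
    ∑ m ∈ Finset.range N, B.choleskyCoeff v i m * B.choleskyCoeff v j m = B (v i) (v j) := by
  simp_rw [hB.choleskyCoeff_mul_choleskyCoeff,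
    sum_range_sub' (fun m => B.schurSeq v m (v i) (v j)), hB.schurSeq_apply_eq_zero v hi, sub_zero]
  rfl

theorem IsPosSemidef.exists_lp_gram (hB : B.IsPosSemidef) :
    ∃ u : ℕ → ℓ²(ℕ, ℝ), ∀ i j, inner ℝ (u i) (u j) = B (v i) (v j) := by
  have hsupp : ∀ i, ∀ m ∉ Finset.range (i + 1), B.choleskyCoeff v i m = 0 := fun i m hm =>
    hB.choleskyCoeff_eq_zero v (by simpa using hm)
  refine ⟨fun i => ⟨B.choleskyCoeff v i, memℓp_gen ?_⟩, fun i j => ?_⟩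
  · exact summable_of_ne_finset_zero (s := Finset.range (i + 1)) fun m hm => by simp [hsupp i m hm]
  rw [lp.inner_eq_tsum, tsum_eq_sum (s := Finset.range (i + 1)) fun m hm => by simp [hsupp i m hm]]
  simp only [RCLike.inner_apply', conj_trivial]
  exact hB.sum_choleskyCoeff_mul v (Nat.lt_succ_self i)

section NegOrthonormal

variable {ι : Type*} [Fintype ι]

/-- For `B.IsNegOrthonormal f` this is the `B`-orthogonal projection onto the `B`-orthogonal
complement of `span f`. -/
noncomputable def complProj (B : BilinForm ℝ V) (f : ι → V) : V →ₗ[ℝ] V :=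
  LinearMap.id + ∑ t, (B.flip (f t)).smulRight (f t)

lemma complProj_apply (f : ι → V) (x : V) : B.complProj f x = x + ∑ t, B x (f t) • f t := by
  simp [complProj]

variable [DecidableEq ι]

def IsNegOrthonormal (B : BilinForm ℝ V) (f : ι → V) : Prop :=
  ∀ s t, B (f s) (f t) = if s = t then -1 else 0

namespace IsNegOrthonormal

variable {f : ι → V}

lemma apply_sum_smul_left (hf : B.IsNegOrthonormal f) (c : ι → ℝ) (t : ι) :
    B (∑ s, c s • f s) (f t) = -c t := by
  simp [map_sum, hf _ t]

lemma apply_sum_smul_sum_smul (hf : B.IsNegOrthonormal f) (c d : ι → ℝ) :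
    B (∑ s, c s • f s) (∑ t, d t • f t) = -∑ t, c t * d t := by
  simp only [map_sum (B _), map_smul, smul_eq_mul, hf.apply_sum_smul_left, mul_comm (d _),
    neg_mul, sum_neg_distrib]

lemma linearIndependent (hf : B.IsNegOrthonormal f) : LinearIndependent ℝ f :=
  Fintype.linearIndependent_iff.mpr fun c hc t => by
    simpa [hc] using hf.apply_sum_smul_left c t

lemma apply_self_neg (hf : B.IsNegOrthonormal f) {x : V} (hx : x ∈ Submodule.span ℝ (Set.range f))
    (hx0 : x ≠ 0) : B x x < 0 := by
  obtain ⟨c, rfl⟩ := Submodule.mem_span_range_iff_exists_fun ℝ |>.mp hx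
  obtain ⟨t, ht⟩ : ∃ t, c t ≠ 0 := by
    by_contra! h
    simp [h] at hx0
  rw [hf.apply_sum_smul_sum_smul, neg_lt_zero]
  exact sum_pos' (fun s _ => mul_self_nonneg _) ⟨t, mem_univ _, mul_self_pos.mpr ht⟩

lemma apply_complProj_left (hf : B.IsNegOrthonormal f) (x : V) (t : ι) :
    B (B.complProj f x) (f t) = 0 := by
  rw [complProj_apply, map_add, LinearMap.add_apply, hf.apply_sum_smul_left]
  ring

lemma apply_complProj_complProj (hf : B.IsNegOrthonormal f) (hB : B.IsSymm) (x y : V) :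
    B (B.complProj f x) (B.complProj f y) = B x y + ∑ t, B x (f t) * B y (f t) := by
  have hleft : B (∑ t, B x (f t) • f t) y = ∑ t, B x (f t) * B y (f t) := by
    simp [map_sum, hB.eq _ y]
  simp only [complProj_apply, map_add, LinearMap.add_apply, hf.apply_sum_smul_sum_smul, hleft,
    map_sum (B x), map_smul, smul_eq_mul]
  simp only [mul_comm (B y _)]
  ring

lemma snoc {m : ℕ} {f : Fin m → V} (hf : B.IsNegOrthonormal f) (hB : B.IsSymm) {x : V}
    (hx : ∀ t, B x (f t) = 0) (hxx : B x x < 0) :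
    B.IsNegOrthonormal (Fin.snoc f ((√(-B x x))⁻¹ • x) : Fin (m + 1) → V) := by
  intro s t
  induction s using Fin.lastCases <;> induction t using Fin.lastCases
  · have : √(-B x x) ^ 2 = -B x x := Real.sq_sqrt (by linarith)
    simp only [Fin.snoc_last, map_smul, LinearMap.smul_apply, smul_eq_mul, if_true]
    rw [← mul_assoc, ← mul_inv, ← sq, this, inv_neg, neg_mul, inv_mul_cancel₀ hxx.ne]
  · simp [hx, (Fin.castSucc_lt_last _).ne']
  · simp [hB.eq (f _) x, hx, (Fin.castSucc_lt_last _).ne]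
  · simp [hf _ _]

end IsNegOrthonormal

lemma exists_isNegOrthonormal_maximal {k : ℕ}
    (hk : ∀ m (f : Fin m → V), B.IsNegOrthonormal f → m ≤ k) :
    ∃ m ≤ k, ∃ f : Fin m → V, B.IsNegOrthonormal f ∧
      ∀ g : Fin (m + 1) → V, ¬ B.IsNegOrthonormal g := by
  classical
  let P m := ∃ f : Fin m → V, B.IsNegOrthonormal f
  have hP0 : P 0 := ⟨finZeroElim, finZeroElim⟩
  obtain ⟨f, hf⟩ : P (Nat.findGreatest P k) := Nat.findGreatest_spec (Nat.zero_le k) hP0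
  exact ⟨_, Nat.findGreatest_le k, f, hf,
    fun g hg => Nat.findGreatest_is_greatest (Nat.lt_succ_self _) (hk _ g hg) ⟨g, hg⟩⟩

lemma IsSymm.isPosSemidef_comp_complProj (hB : B.IsSymm) {m : ℕ} {f : Fin m → V}
    (hf : B.IsNegOrthonormal f) (hmax : ∀ g : Fin (m + 1) → V, ¬ B.IsNegOrthonormal g) :
    (B.comp (B.complProj f) (B.complProj f)).IsPosSemidef := by
  refine ⟨⟨fun x y => hB.eq _ _⟩, ⟨fun x => ?_⟩⟩
  by_contra! hneg
  exact hmax _ (hf.snoc hB (hf.apply_complProj_left x) hneg)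

end NegOrthonormal

theorem IsSymm.exists_lp_euclidean_gram (hB : B.IsSymm) {k : ℕ}
    (hk : ∀ m (f : Fin m → V), B.IsNegOrthonormal f → m ≤ k) (v : ℕ → V) :
    ∃ (u : ℕ → ℓ²(ℕ, ℝ)) (w : ℕ → EuclideanSpace ℝ (Fin k)),
      ∀ i j, B (v i) (v j) = inner ℝ (u i) (u j) - inner ℝ (w i) (w j) := by
  obtain ⟨m, hmk, f, hf, hmax⟩ := exists_isNegOrthonormal_maximal hk
  obtain ⟨u, hu⟩ := (hB.isPosSemidef_comp_complProj hf hmax).exists_lp_gram v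
  set e := EuclideanSpace.basisFun (Fin k) ℝ ∘ Fin.castLE hmk
  have he : Orthonormal ℝ e :=
    (EuclideanSpace.basisFun (Fin k) ℝ).orthonormal.comp _ (Fin.castLE_injective hmk)
  refine ⟨u, fun i => ∑ t, B (v i) (f t) • e t, fun i j => ?_⟩
  rw [hu, he.inner_sum, comp_apply, hf.apply_complProj_complProj hB]
  simp

end LinearMap.BilinForm

namespace Matrix.IsHermitian

variable {n : Type*} [Fintype n] [DecidableEq n] {A : Matrix n n ℝ}

lemma dotProduct_mulVec_self_eq_sum (hA : A.IsHermitian) (x : n → ℝ) :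
    x ⬝ᵥ A *ᵥ x =
      ∑ i, hA.eigenvalues i * (star (hA.eigenvectorUnitary : Matrix n n ℝ) *ᵥ x) i ^ 2 := by
  set U : Matrix n n ℝ := ↑hA.eigenvectorUnitary
  have hU : x ᵥ* U = star U *ᵥ x := by
    rw [star_eq_conjTranspose, conjTranspose_eq_transpose_of_trivial, mulVec_transpose]
  conv_lhs => rw [hA.spectral_theorem, Unitary.conjStarAlgAut_apply]
  rw [← mulVec_mulVec, ← mulVec_mulVec, dotProduct_mulVec, hU]
  simp [dotProduct, mulVec_diagonal, sq, mul_left_comm, U]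

lemma finrank_le_negEigCount (hA : A.IsHermitian) (W : Submodule ℝ (n → ℝ))
    (hW : ∀ x ∈ W, x ≠ 0 → x ⬝ᵥ A *ᵥ x < 0) : Module.finrank ℝ W ≤ negEigCount A := by
  let L : W →ₗ[ℝ] {i // hA.eigenvalues i < 0} → ℝ :=
    LinearMap.funLeft ℝ ℝ Subtype.val ∘ₗ
      (star (hA.eigenvectorUnitary : Matrix n n ℝ)).mulVecLin ∘ₗ W.subtype
  have hL : Function.Injective L := by
    rw [← LinearMap.ker_eq_bot, LinearMap.ker_eq_bot']
    intro x hx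
    by_contra hx0
    refine (hW x x.2 (by simpa using hx0)).not_ge ?_
    rw [hA.dotProduct_mulVec_self_eq_sum]
    refine sum_nonneg fun i _ => ?_
    rcases lt_or_ge (hA.eigenvalues i) 0 with hi | hi
    · have : (star (hA.eigenvectorUnitary : Matrix n n ℝ) *ᵥ x) i = 0 := congrFun hx ⟨i, hi⟩
      simp [this]
    · positivity
  rw [negEigCount, dif_pos hA, Nat.card_eq_fintype_card]
  exact (LinearMap.finrank_le_finrank_of_injective hL).trans_eq
    (Module.finrank_fintype_fun_eq_card ℝ)

lemma card_le_negEigCount (hA : A.IsHermitian) {ι : Type*} [Fintype ι] [DecidableEq ι]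
    {F : ι → n → ℝ} (hF : (toBilin' A).IsNegOrthonormal F) :
    Fintype.card ι ≤ negEigCount A := by
  rw [← finrank_span_eq_card hF.linearIndependent]
  exact hA.finrank_le_negEigCount _ fun x hx hx0 => by
    simpa [toBilin'_apply'] using hF.apply_self_neg hx hx0

end Matrix.IsHermitian

noncomputable def kernelForm (a : ℕ → ℕ → ℝ) : BilinForm ℝ (ℕ →₀ ℝ) :=
  Finsupp.basisSingleOne.constr ℝ fun i => Finsupp.basisSingleOne.constr ℝ (a i)

lemma kernelForm_single_single (a : ℕ → ℕ → ℝ) (i j : ℕ) :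
    kernelForm a (Finsupp.single i 1) (Finsupp.single j 1) = a i j := by
  have hb : ∀ i : ℕ, Finsupp.single i (1 : ℝ) = Finsupp.basisSingleOne i := fun i => rfl
  rw [kernelForm, hb, hb, Module.Basis.constr_basis, Module.Basis.constr_basis]

lemma isSymm_kernelForm {a : ℕ → ℕ → ℝ} (hsym : ∀ i j, a i j = a j i) :
    (kernelForm a).IsSymm :=
  LinearMap.BilinForm.isSymm_iff_flip.mpr <| LinearMap.BilinForm.ext_basis Finsupp.basisSingleOne
    fun i j => by simp [kernelForm_single_single, hsym j i]

noncomputable def extendByZero (n : ℕ) : (Fin n → ℝ) →ₗ[ℝ] ℕ →₀ ℝ :=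
  Finsupp.lmapDomain ℝ ℝ Fin.val ∘ₗ (Finsupp.linearEquivFunOnFinite ℝ ℝ (Fin n)).symm.toLinearMap

lemma kernelForm_comp_extendByZero (a : ℕ → ℕ → ℝ) (n : ℕ) :
    (kernelForm a).comp (extendByZero n) (extendByZero n)
      = Matrix.toBilin' (Matrix.of fun i j : Fin n => a i j) :=
  LinearMap.BilinForm.ext_basis (Pi.basisFun ℝ (Fin n)) fun i j => by
    simp [extendByZero, kernelForm_single_single]

lemma exists_extendByZero_eq {d : ℕ} (f : Fin d → ℕ →₀ ℝ) :
    ∃ n, ∃ F : Fin d → Fin (n + 1) → ℝ, ∀ t, extendByZero (n + 1) (F t) = f t := by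
  obtain ⟨n, hn⟩ := exists_nat_subset_range (univ.biUnion fun t => (f t).support)
  have hsupp : ∀ t, ↑(f t).support ⊆ Set.range (Fin.val : Fin (n + 1) → ℕ) := fun t i hi =>
    ⟨⟨i, Nat.lt_succ_of_lt (mem_range.mp (hn (mem_biUnion.mpr ⟨t, mem_univ t, hi⟩)))⟩, rfl⟩
  refine ⟨n, fun t => Finsupp.linearEquivFunOnFinite ℝ ℝ _
    (Finsupp.comapDomain Fin.val (f t) Fin.val_injective.injOn), fun t => ?_⟩
  simpa [extendByZero] using Finsupp.mapDomain_comapDomain _ Fin.val_injective (f t) (hsupp t)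

lemma card_le_of_isNegOrthonormal_kernelForm {k : ℕ} {a : ℕ → ℕ → ℝ}
    (hsym : ∀ i j, a i j = a j i)
    (h : ∀ n : ℕ, 1 ≤ n → negEigCount (Matrix.of fun i j : Fin n => a i.1 j.1) ≤ k)
    {d : ℕ} {f : Fin d → ℕ →₀ ℝ} (hf : (kernelForm a).IsNegOrthonormal f) : d ≤ k := by
  obtain ⟨n, F, hF⟩ := exists_extendByZero_eq f
  have hA : (Matrix.of fun i j : Fin (n + 1) => a i j).IsHermitian :=
    Matrix.IsHermitian.ext fun i j => by simp [hsym]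
  have hFneg : (Matrix.toBilin' (Matrix.of fun i j : Fin (n + 1) => a i j)).IsNegOrthonormal F :=
    fun s t => by rw [← kernelForm_comp_extendByZero, LinearMap.BilinForm.comp_apply, hF, hF, hf]
  simpa using (hA.card_le_negEigCount hFneg).trans (h (n + 1) n.succ_pos)

/-- Lemma 3.5: if every leading principal submatrix of an infinite real symmetric matrix has
at most `k` negative eigenvalues, then the matrix is realized as an indefinite Gram matrix of
a sequence of vectors in `ℓ² ⊕ ℝ^k`, i.e. `a i j = ⟨uᵢ, uⱼ⟩ - ⟨wᵢ, wⱼ⟩`. -/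
theorem infinite_gram_realization (k : ℕ) (a : ℕ → ℕ → ℝ)
    (hsym : ∀ i j, a i j = a j i)
    (h : ∀ n : ℕ, 1 ≤ n → negEigCount (Matrix.of fun i j : Fin n => a i.1 j.1) ≤ k) :
    ∃ (u : ℕ → lp (fun _ : ℕ => ℝ) 2) (w : ℕ → EuclideanSpace ℝ (Fin k)),
      ∀ i j : ℕ, a i j = (inner ℝ (u i) (u j) : ℝ) - (inner ℝ (w i) (w j) : ℝ) := by
  obtain ⟨u, w, huw⟩ := (isSymm_kernelForm hsym).exists_lp_euclidean_gram
    (fun _ _ hf => card_le_of_isNegOrthonormal_kernelForm hsym h hf) fun i => Finsupp.single i 1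
  exact ⟨u, w, fun i j => by rw [← huw, kernelForm_single_single]⟩
end
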